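/- As α → −∞ the roots of h_{m,μ,α} spread out: for every ε > 0 and every M > 0 there exists α₀ < 0 such that for all α < α₀, (i) h_{m,μ,α} has a real root in the interval (−ε, 0), (ii) h_{m,μ,α} has a real root less than −M, and (iii) h_{m,μ,α}, viewed as a complex polynomial, has a nonreal root w with Re w > M and Im w > M. -/
import Mathlib
set_option maxHeartbeats 1000000


/-- The characteristic quartic `h_{m,μ,α}(z) = z⁴ − 2m²z² − αz + m⁴ + μm²` of the ODE
`ψ⁗ − 2m²ψ″ − αψ′ + (m⁴ + μm²)ψ = 0`. -/
noncomputable def hQuartic (m : ℕ) (μ α : ℝ) : ℝ → ℝ :=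
  fun z => z ^ 4 - 2 * (m : ℝ) ^ 2 * z ^ 2 - α * z + (m : ℝ) ^ 4 + μ * (m : ℝ) ^ 2

/-- The characteristic quartic viewed as a complex polynomial function. -/
noncomputable def hQuarticC (m : ℕ) (μ α : ℝ) : ℂ → ℂ :=
  fun z => z ^ 4 - 2 * (m : ℂ) ^ 2 * z ^ 2 - (α : ℂ) * z + (m : ℂ) ^ 4 + (μ : ℂ) * (m : ℂ) ^ 2

private lemma cube_root_mono' {x y : ℝ} (hx : 0 ≤ x) (hy : 0 ≤ y) (h : x ^ 3 ≤ y ^ 3) :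
    x ≤ y := by
  by_contra hc
  push_neg at hc
  have hx0 : 0 < x := lt_of_le_of_lt hy hc
  have h2 : 0 < x ^ 2 + x * y + y ^ 2 := by positivity
  nlinarith [mul_pos (sub_pos.2 hc) h2]

/-- As `α → −∞` the roots of `h_{m,μ,α}` spread out: for every `ε > 0` and every
`M > 0` there exists `α₀ < 0` such that for all `α < α₀`,
(i) `h_{m,μ,α}` has a real root in `(−ε, 0)`,
(ii) `h_{m,μ,α}` has a real root less than `−M`, and
(iii) `h_{m,μ,α}`, viewed as a complex polynomial, has a nonreal root `w` with
`Re w > M` and `Im w > M`. -/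
theorem quartic_roots_spread_as_alpha_to_neg_infty (m : ℕ) (hm : 0 < m) (μ : ℝ)
    (hμ : 0 < μ) (ε : ℝ) (hε : 0 < ε) (M : ℝ) (hM : 0 < M) :
    ∃ α₀ : ℝ, α₀ < 0 ∧ ∀ α : ℝ, α < α₀ →
      (∃ z : ℝ, -ε < z ∧ z < 0 ∧ hQuartic m μ α z = 0) ∧
      (∃ z : ℝ, z < -M ∧ hQuartic m μ α z = 0) ∧
      (∃ w : ℂ, w.im ≠ 0 ∧ M < w.re ∧ M < w.im ∧ hQuarticC m μ α w = 0) := by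
  have hm1 : (1:ℝ) ≤ (m:ℝ) := by exact_mod_cast hm
  have hmpos : (0:ℝ) < (m:ℝ) := by linarith
  have hm2 : (1:ℝ) ≤ (m:ℝ)^2 := by nlinarith
  have hm4 : (1:ℝ) ≤ (m:ℝ)^4 := by nlinarith
  set C : ℝ := (m:ℝ)^4 + μ*(m:ℝ)^2 with hCdef
  have hC1 : 1 < C := by
    rw [hCdef]
    have h := mul_nonneg hμ.le (by linarith : (0:ℝ) ≤ (m:ℝ)^2 - 1)
    nlinarith
  have hCpos : (0:ℝ) < C := by linarith
  set β₀ : ℝ := 1 + 2*C + 2*C/ε + 16*(m:ℝ)^2*C + 8*C + 2744*(m:ℝ)^6 + 200*C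
      + 27*(M+1)^3 with hβ₀def
  have p2 : (0:ℝ) < 2*C/ε := div_pos (by linarith) hε
  have p3 : (0:ℝ) < 16*(m:ℝ)^2*C := mul_pos (mul_pos (by norm_num) (pow_pos hmpos 2)) hCpos
  have p4 : (0:ℝ) < 2744*(m:ℝ)^6 := by have := pow_pos hmpos 6; linarith
  have p6 : (0:ℝ) < 27*(M+1)^3 := by have := pow_pos (show (0:ℝ) < M+1 by linarith) 3; linarith
  have hβ₀pos : 0 < β₀ := by rw [hβ₀def]; linarith
  refine ⟨-β₀, by linarith, ?_⟩
  intro α hα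
  set β : ℝ := -α with hβdef
  have hαβ : α = -β := by rw [hβdef]; ring
  have hβ : β₀ < β := by rw [hβdef]; linarith
  have hβpos : (0:ℝ) < β := by linarith
  have hβne : β ≠ 0 := ne_of_gt hβpos
  -- individual lower bounds for β
  have hβ1 : (1:ℝ) < β := by rw [hβ₀def] at hβ; linarith
  have hβ2C : 2*C < β := by rw [hβ₀def] at hβ; linarith
  have hβε : 2*C/ε < β := by rw [hβ₀def] at hβ; linarith
  have hβ16 : 16*(m:ℝ)^2*C < β := by rw [hβ₀def] at hβ; linarith
  have hβ8 : 8*C < β := by rw [hβ₀def] at hβ; linarith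
  have hβ2744 : 2744*(m:ℝ)^6 < β := by rw [hβ₀def] at hβ; linarith
  have hβ200 : 200*C < β := by rw [hβ₀def] at hβ; linarith
  have hβ27 : 27*(M+1)^3 < β := by rw [hβ₀def] at hβ; linarith
  have hβsq : β ≤ β^2 := by
    have := mul_le_mul_of_nonneg_left hβ1.le hβpos.le
    nlinarith
  -- the cube root T of β
  set T : ℝ := β ^ ((1:ℝ)/3) with hTdef
  have hTpos : 0 < T := Real.rpow_pos_of_pos hβpos _
  have hT3 : T^3 = β := by
    rw [hTdef, ← Real.rpow_natCast (β ^ ((1:ℝ)/3)) 3, ← Real.rpow_mul hβpos.le]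
    norm_num
  have hT1 : (1:ℝ) ≤ T := by
    refine cube_root_mono' zero_le_one hTpos.le ?_
    rw [hT3]; norm_num; linarith
  have hT14 : 14*(m:ℝ)^2 ≤ T^2 := by
    have h1 : (14*(m:ℝ)^2)^3 ≤ (T^2)^3 := by
      rw [show ((T^2)^3 : ℝ) = (T^3)^2 from by ring, hT3]
      linarith [hβ2744, hβsq]
    exact cube_root_mono' (by positivity) (by positivity) h1
  have hT3M : 3*(M+1) ≤ T := by
    have h1 : (3*(M+1))^3 ≤ T^3 := by rw [hT3]; linarith [hβ27]
    exact cube_root_mono' (by positivity) hTpos.le h1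
  have hβT4 : β ≤ T^4 := by
    have h1 : β ≤ T*β := le_mul_of_one_le_left hβpos.le hT1
    calc β ≤ T*β := h1
      _ = T^4 := by rw [← hT3]; ring
  have hT4 : 8*C ≤ T^4 := by linarith
  have hT200 : 200*C ≤ T^4 := by linarith
  have hT9 : 9*(M+1)^2 ≤ T^2 := by
    linarith [mul_self_le_mul_self (by linarith : (0:ℝ) ≤ 3*(M+1)) hT3M]
  -- continuity
  have hcont : Continuous (hQuartic m μ α) := by
    unfold hQuartic; fun_prop
  -- ROOT r₁ near 0
  set u : ℝ := 2*C/β with hudef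
  have hupos : 0 < u := by rw [hudef]; positivity
  have hβu : β * u = 2*C := by rw [hudef]; field_simp
  have hu1 : u ≤ 1 := by rw [hudef, div_le_one hβpos]; linarith
  have huε : u < ε := by
    rw [hudef, div_lt_iff₀ hβpos]
    rw [div_lt_iff₀ hε] at hβε
    linarith
  have huT : u ≤ T/100 := by
    rw [hudef, div_le_div_iff₀ hβpos (by norm_num : (0:ℝ) < 100)]
    have hTβ : T*β = T^4 := by rw [← hT3]; ring
    linarith [hT200, hTβ]
  have hu2 : 4*(m:ℝ)^2*u^2 ≤ C := by
    have h16 : 16*(m:ℝ)^2*C ≤ β^2 := by linarith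
    have key : 4*(m:ℝ)^2*u^2 = 16*(m:ℝ)^2*C^2/β^2 := by
      rw [hudef]; field_simp; ring
    rw [key, div_le_iff₀ (by positivity : (0:ℝ) < β^2)]
    have h2 := mul_le_mul_of_nonneg_left h16 hCpos.le
    linarith [h2]
  have hf0 : hQuartic m μ α 0 = C := by simp [hQuartic, hCdef]
  have hfu : hQuartic m μ α (-u) < 0 := by
    simp only [hQuartic]
    have hαu : α * u = -(2*C) := by rw [hαβ]; linarith [hβu]
    have hA : u^2 ≤ 1 := by
      have := mul_le_one₀ hu1 hupos.le hu1
      linarith [this]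
    have hB : u^2*u^2 ≤ u^2*1 := mul_le_mul_of_nonneg_left hA (sq_nonneg u)
    have hD : 1*u^2 ≤ (m:ℝ)^2*u^2 := mul_le_mul_of_nonneg_right hm2 (sq_nonneg u)
    have hE : α * -u = 2*C := by linarith [hαu]
    linarith [hαu, hB, hD, hCpos, hCdef, hE, sq_nonneg ((m:ℝ)*u)]
  obtain ⟨r₁, hr₁mem, hr₁⟩ :=
    intermediate_value_Ioo (by linarith : -u ≤ (0:ℝ)) hcont.continuousOn
      (Set.mem_Ioo.mpr (by rw [hf0]; exact ⟨hfu, hCpos⟩))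
  have hr₁l : -u < r₁ := hr₁mem.1
  have hr₁r : r₁ < 0 := hr₁mem.2
  have hr₁eq : r₁^4 - 2*(m:ℝ)^2*r₁^2 - α*r₁ + ((m:ℝ)^4 + μ*(m:ℝ)^2) = 0 := by
    have h := hr₁; simp only [hQuartic] at h; linarith [h]
  have hr₁eq' : r₁^4 - 2*(m:ℝ)^2*r₁^2 + β*r₁ + ((m:ℝ)^4 + μ*(m:ℝ)^2) = 0 := by
    linear_combination hr₁eq + r₁ * hαβ
  have ht₁ : C/(2*β) ≤ -r₁ := by
    rw [div_le_iff₀ (by linarith : (0:ℝ) < 2*β)]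
    have hr2 : r₁^2 ≤ u^2 := by
      linarith [mul_self_lt_mul_self (by linarith : (0:ℝ) ≤ -r₁) (by linarith : -r₁ < u)]
    have h4m : 4*(m:ℝ)^2*r₁^2 ≤ 4*(m:ℝ)^2*u^2 :=
      mul_le_mul_of_nonneg_left hr2 (by positivity)
    linarith [hr₁eq', hu2, h4m, sq_nonneg (r₁^2), hCdef]
  -- ROOT r₂ near -T
  have hα3 : α = -T^3 := by rw [hαβ, hT3]
  have hfb : hQuartic m μ α (-(19/20*T)) < 0 := by
    simp only [hQuartic]
    rw [hα3]
    have hmT : (0:ℝ) ≤ (m:ℝ)^2*T^2 := by positivity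
    linarith [hT4, hmT, hCpos, hCdef]
  have hfa : 0 < hQuartic m μ α (-(21/20*T)) := by
    simp only [hQuartic]
    rw [hα3]
    have h1 : 14*(m:ℝ)^2*(T^2) ≤ T^2*(T^2) := mul_le_mul_of_nonneg_right hT14 (sq_nonneg T)
    linarith [h1, hCpos, hCdef]
  obtain ⟨r₂, hr₂mem, hr₂⟩ :=
    intermediate_value_Ioo' (by linarith : -(21/20*T) ≤ -(19/20*T)) hcont.continuousOn
      (Set.mem_Ioo.mpr ⟨hfb, hfa⟩)
  have hr₂l : -(21/20*T) < r₂ := hr₂mem.1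
  have hr₂r : r₂ < -(19/20*T) := hr₂mem.2
  have hr₂eq : r₂^4 - 2*(m:ℝ)^2*r₂^2 - α*r₂ + ((m:ℝ)^4 + μ*(m:ℝ)^2) = 0 := by
    have h := hr₂; simp only [hQuartic] at h; linarith [h]
  have hr₂M : r₂ < -M := by linarith
  -- the pair of nonreal roots
  have hr₁r₂ : r₂ < r₁ := by linarith
  have key1 : α = (r₁+r₂)*((r₁+r₂)^2 - 2*(r₁*r₂) - 2*(m:ℝ)^2) := by
    have h12 : r₁ - r₂ ≠ 0 := sub_ne_zero.mpr hr₁r₂.ne'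
    have h : α*(r₁-r₂) = ((r₁+r₂)*((r₁+r₂)^2 - 2*(r₁*r₂) - 2*(m:ℝ)^2))*(r₁-r₂) := by
      linear_combination hr₂eq - hr₁eq
    exact mul_right_cancel₀ h12 h
  have key2 : (m:ℝ)^4 + μ*(m:ℝ)^2 = (r₁*r₂)*((r₁+r₂)^2 - r₁*r₂ - 2*(m:ℝ)^2) := by
    linear_combination hr₁eq + r₁ * key1
  set dd : ℝ := (3/4)*(r₁+r₂)^2 - r₁*r₂ - 2*(m:ℝ)^2 with hdd
  have hsum : (19/20)*T < -(r₁+r₂) := by linarith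
  have hsum2 : (361/400)*T^2 < (r₁+r₂)^2 := by
    have h := mul_self_lt_mul_self (by linarith : (0:ℝ) ≤ 19/20*T) hsum
    linarith [h]
  have hprod : r₁*r₂ ≤ (21/2000)*T^2 := by
    have h1 : -r₁ ≤ T/100 := by linarith
    have h2 : -r₂ ≤ 21/20*T := by linarith
    have h := mul_le_mul h1 h2 (by linarith) (by linarith : (0:ℝ) ≤ T/100)
    linarith [h]
  have hdM : M^2 < dd := by
    rw [hdd]
    linarith [hsum2, hprod, hT14, hT9, hM, sq_nonneg T]
  have hd0 : 0 < dd := lt_trans (pow_pos hM 2) hdM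
  have hx : M < -(r₁+r₂)/2 := by linarith
  have himpos : 0 < Real.sqrt dd := Real.sqrt_pos.2 hd0
  have himM : M < Real.sqrt dd := by
    rw [show M = Real.sqrt (M^2) by rw [Real.sqrt_sq hM.le]]
    exact Real.sqrt_lt_sqrt (by positivity) hdM
  -- complex versions
  have key1C : (α:ℂ) = ((r₁:ℂ)+(r₂:ℂ))*(((r₁:ℂ)+(r₂:ℂ))^2 - 2*((r₁:ℂ)*(r₂:ℂ)) - 2*(m:ℂ)^2) := by
    exact_mod_cast key1
  have key2C : (m:ℂ)^4 + (μ:ℂ)*(m:ℂ)^2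
      = ((r₁:ℂ)*(r₂:ℂ))*(((r₁:ℂ)+(r₂:ℂ))^2 - (r₁:ℂ)*(r₂:ℂ) - 2*(m:ℂ)^2) := by
    exact_mod_cast key2
  have hsqR : (Real.sqrt dd)^2 = (3/4)*(r₁+r₂)^2 - r₁*r₂ - 2*(m:ℝ)^2 := by
    rw [Real.sq_sqrt hd0.le]
  have hsqC : ((Real.sqrt dd : ℝ):ℂ)^2
      = (3/4)*((r₁:ℂ)+(r₂:ℂ))^2 - (r₁:ℂ)*(r₂:ℂ) - 2*(m:ℂ)^2 := by
    have h := congrArg (Complex.ofReal) hsqR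
    push_cast at h
    exact_mod_cast h
  have hfact : ∀ z : ℂ, hQuarticC m μ α z
      = (z - (r₁:ℂ))*(z - (r₂:ℂ))*(z^2 + ((r₁:ℂ)+(r₂:ℂ))*z
        + (((r₁:ℂ)+(r₂:ℂ))^2 - (r₁:ℂ)*(r₂:ℂ) - 2*(m:ℂ)^2)) := by
    intro z
    simp only [hQuarticC]
    linear_combination (-z) * key1C + key2C
  have hquad : ((↑(-(r₁+r₂)/2) : ℂ) + (↑(Real.sqrt dd) : ℂ) * Complex.I)^2
      + ((r₁:ℂ)+(r₂:ℂ))*((↑(-(r₁+r₂)/2) : ℂ) + (↑(Real.sqrt dd) : ℂ) * Complex.I)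
      + (((r₁:ℂ)+(r₂:ℂ))^2 - (r₁:ℂ)*(r₂:ℂ) - 2*(m:ℂ)^2) = 0 := by
    push_cast
    linear_combination ((Real.sqrt dd : ℝ):ℂ)^2 * Complex.I_sq - hsqC
  refine ⟨⟨r₁, by linarith, hr₁r, hr₁⟩, ⟨r₂, hr₂M, hr₂⟩,
    ⟨(↑(-(r₁+r₂)/2) : ℂ) + (↑(Real.sqrt dd) : ℂ) * Complex.I, ?_, ?_, ?_, ?_⟩⟩
  · have h : ((↑(-(r₁+r₂)/2) : ℂ) + (↑(Real.sqrt dd) : ℂ) * Complex.I).im = Real.sqrt dd := by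
      simp
    rw [h]; exact himpos.ne'
  · have h : ((↑(-(r₁+r₂)/2) : ℂ) + (↑(Real.sqrt dd) : ℂ) * Complex.I).re = -(r₁+r₂)/2 := by
      simp
    rw [h]; exact hx
  · have h : ((↑(-(r₁+r₂)/2) : ℂ) + (↑(Real.sqrt dd) : ℂ) * Complex.I).im = Real.sqrt dd := by
      simp
    rw [h]; exact himM
  · rw [hfact, hquad, mul_zero]
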